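/- arXiv:1901.05070 — 6 statements merged into one kernel-verified Lean document; each statement's English description precedes it below -/
import Mathlib

section
/- Suppose U : S → ℝ, U_x : 𝒳 × S → ℝ and U_c : ℝ × S → ℝ satisfy, for every state C, every X ∈ 𝒳 and every fare p (with all displayed integrals well defined): (i) U(C) = (1 − λ)·γ·U(f(C)) + λ·∫ U_x(X, C) dP_j(X); (ii) U_x(X, C) = (1 − π_x(p_x(X), C))·γ·U(f(C)) + π_x(p_x(X), C)·[u(X) + ∫ U_c(p'(X'), C) dP'_j(X' | X)] + ũ(X); (iii) U_c(p, C) = Σ_{c ∈ A(C)} π_c(c | p, C)·[r(p, c) + γ·U(f(C, c))]. Define V(C) := U(C) − U(C0) and V_c(p, C) := U_c(p, C) − U_c(p, C0). Then V(C0) = 0 and, for all C, X and p: V_c(p, C) = Σ_{c ∈ A(C)} π_c(c | p, C)·[r(p, c) + γ·V(f(C, c))], and V(C) = γ·V(f(C)) + λ·∫ { π_x(p_x(X), C)·[u(X) + ∫ V_c(p'(X'), C) dP'_j(X' | X) − γ·V(f(C))] − π_x(p_x(X), C0)·u(X) } dP_j(X). -/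
open MeasureTheory ProbabilityTheory

/-- Passing from the accumulated-utility functions `U, Ux, Uc` to the net utility
gain `V(C) := U(C) − U(C0)` and `Vc(p, C) := Uc(p, C) − Uc(p, C0)` yields the
recentered Bellman-type equations, with `V(C0) = 0`. -/
theorem stmt_3 {S Act X X' : Type*} [MeasurableSpace X] [MeasurableSpace X']
    (C0 : S) (A : S → Finset Act) (c0 : Act)
    (hA0 : A C0 = {c0}) (hc0 : ∀ C, c0 ∈ A C)
    (f : S → Act → S) (hf0 : f C0 c0 = C0)
    (r : ℝ → Act → ℝ) (hr0 : ∀ p, r p c0 = 0) (hr : ∀ p c, 0 ≤ r p c)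
    (Pj : Measure X) [IsProbabilityMeasure Pj]
    (κ : Kernel X X') [IsMarkovKernel κ]
    (u ut : X → ℝ) (hu : Integrable u Pj) (hut : Integrable ut Pj)
    (px : X → ℝ) (hpx : Measurable px) (p' : X' → ℝ) (hp' : Measurable p')
    (lam γ : ℝ) (hlam : lam ∈ Set.Icc (0 : ℝ) 1) (hγ : γ ∈ Set.Icc (0 : ℝ) 1)
    (πx : ℝ → S → ℝ) (hπx : ∀ p C, πx p C ∈ Set.Icc (0 : ℝ) 1)
    (πc : Act → ℝ → S → ℝ) (hπc : ∀ c p C, 0 ≤ πc c p C)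
    (hπcsum : ∀ p C, ∑ c ∈ A C, πc c p C = 1)
    (U : S → ℝ) (Ux : X → S → ℝ) (Uc : ℝ → S → ℝ)
    (hUxInt : ∀ C, Integrable (fun x => Ux x C) Pj)
    (hUcInt : ∀ x C, Integrable (fun x' => Uc (p' x') C) (κ x))
    (hi : ∀ C, U C = (1 - lam) * γ * U (f C c0) + lam * ∫ x, Ux x C ∂Pj)
    (hii : ∀ x C, Ux x C = (1 - πx (px x) C) * γ * U (f C c0)
        + πx (px x) C * (u x + ∫ x', Uc (p' x') C ∂(κ x)) + ut x)
    (hiii : ∀ p C, Uc p C = ∑ c ∈ A C, πc c p C * (r p c + γ * U (f C c)))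
    (V : S → ℝ) (hV : ∀ C, V C = U C - U C0)
    (Vc : ℝ → S → ℝ) (hVc : ∀ p C, Vc p C = Uc p C - Uc p C0) :
    V C0 = 0 ∧
    (∀ p C, Vc p C = ∑ c ∈ A C, πc c p C * (r p c + γ * V (f C c))) ∧
    (∀ C, V C = γ * V (f C c0) + lam * ∫ x,
        (πx (px x) C * (u x + (∫ x', Vc (p' x') C ∂(κ x)) - γ * V (f C c0))
          - πx (px x) C0 * u x) ∂Pj) := by
  have hUc0 : ∀ p, Uc p C0 = γ * U C0 := by
    intro p
    have hs := hπcsum p C0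
    rw [hA0, Finset.sum_singleton] at hs
    rw [hiii p C0, hA0, Finset.sum_singleton, hs, hr0, hf0]
    ring
  have hVc0 : ∀ p C, Vc p C = Uc p C - γ * U C0 := fun p C => by
    rw [hVc, hUc0]
  refine ⟨by rw [hV]; ring, ?_, ?_⟩
  · intro p C
    rw [hVc0, hiii]
    have h1 : ∑ c ∈ A C, πc c p C * (r p c + γ * V (f C c))
        = ∑ c ∈ A C, (πc c p C * (r p c + γ * U (f C c)) - πc c p C * (γ * U C0)) := by
      apply Finset.sum_congr rfl
      intro c _
      rw [hV]; ring
    rw [h1, Finset.sum_sub_distrib, ← Finset.sum_mul, hπcsum]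
    ring
  · intro C
    have hkern : ∀ x, ∫ x', Vc (p' x') C ∂(κ x) = (∫ x', Uc (p' x') C ∂(κ x)) - γ * U C0 := by
      intro x
      simp only [hVc0]
      rw [integral_sub (hUcInt x C) (integrable_const _), integral_const]
      simp
    have hptw : ∀ x, πx (px x) C * (u x + (∫ x', Vc (p' x') C ∂(κ x)) - γ * V (f C c0))
          - πx (px x) C0 * u x
        = Ux x C - Ux x C0 - γ * V (f C c0) := by
      intro x
      rw [hkern, hii x C, hii x C0, hf0]
      have h2 : ∫ x', Uc (p' x') C0 ∂(κ x) = γ * U C0 := by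
        simp only [hUc0]
        rw [integral_const]; simp
      rw [h2, hV]
      ring
    have hint : ∫ x, (πx (px x) C * (u x + (∫ x', Vc (p' x') C ∂(κ x)) - γ * V (f C c0))
          - πx (px x) C0 * u x) ∂Pj
        = (∫ x, Ux x C ∂Pj) - (∫ x, Ux x C0 ∂Pj) - γ * V (f C c0) := by
      rw [show (fun x => πx (px x) C * (u x + (∫ x', Vc (p' x') C ∂(κ x)) - γ * V (f C c0))
          - πx (px x) C0 * u x) = fun x => Ux x C - Ux x C0 - γ * V (f C c0) from funext hptw]
      have hI : Integrable (fun x => Ux x C - Ux x C0) Pj := (hUxInt C).sub (hUxInt C0)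
      rw [integral_sub hI (integrable_const _),
        integral_sub (hUxInt C) (hUxInt C0), integral_const]
      simp
    have e1 := hi C
    have e2 := hi C0
    rw [hf0] at e2
    rw [hint, hV C, hV (f C c0)]
    linear_combination e1 - e2
end

section
/- Assume γ = 1, λ ∈ [0,1], and that there is a rank function N : S → ℕ with N(C0) = 0 and N(f(C, c)) < N(C) for every C ≠ C0 and every c ∈ A(C). For a function W : S → ℝ and X ∈ 𝒳, write G_W(X, C) := ∫ max_{c ∈ A(C)} [r(p'(X'), c) + W(f(C, c))] dP'_j(X' | X). Suppose V*, V^L, V^U : S → ℝ satisfy V*(C0) = V^L(C0) = V^U(C0) = 0 and, for every C ≠ C0 (with all displayed integrals well defined): V*(C) = V*(f(C)) + λ·∫ [max(u(X) + G_{V*}(X, C) − V*(f(C)), 0) − max(u(X), 0)] dP_j(X); V^L(C) = V^L(f(C)) + λ·∫ I(u(X) ≥ 0)·[G_{V^L}(X, C) − V^L(f(C))] dP_j(X); V^U(C) = V^U(f(C)) + λ·∫ I(u(X) + G_{V*}(X, C) − V*(f(C)) ≥ 0)·[G_{V^U}(X, C) − V^U(f(C))] dP_j(X). Then V^L(C)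 ≤ V*(C) ≤ V^U(C) for every C ∈ S. -/
open MeasureTheory ProbabilityTheory

/-- With `γ = 1`, the lower-bound value function `V^L` and upper-bound value
function `V^U` sandwich the optimal value function `V*`: `V^L ≤ V* ≤ V^U`. -/
theorem stmt_4 {S Act X X' : Type*} [MeasurableSpace X] [MeasurableSpace X']
    (C0 : S) (A : S → Finset Act) (c0 : Act)
    (hA0 : A C0 = {c0}) (hc0 : ∀ C, c0 ∈ A C)
    (f : S → Act → S) (hf0 : f C0 c0 = C0)
    (r : ℝ → Act → ℝ) (hr0 : ∀ p, r p c0 = 0) (hr : ∀ p c, 0 ≤ r p c)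
    (Pj : Measure X) [IsProbabilityMeasure Pj]
    (κ : Kernel X X') [IsMarkovKernel κ]
    (u : X → ℝ) (hu : Integrable u Pj)
    (p' : X' → ℝ) (hp' : Measurable p')
    (lam : ℝ) (hlam : lam ∈ Set.Icc (0 : ℝ) 1)
    (N : S → ℕ) (hN0 : N C0 = 0)
    (hN : ∀ C, C ≠ C0 → ∀ c ∈ A C, N (f C c) < N C)
    (G : (S → ℝ) → X → S → ℝ)
    (hG : ∀ W x C, G W x C =
      ∫ x', (A C).sup' ⟨c0, hc0 C⟩ (fun c => r (p' x') c + W (f C c)) ∂(κ x))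
    (Vs VL VU : S → ℝ)
    (hVs0 : Vs C0 = 0) (hVL0 : VL C0 = 0) (hVU0 : VU C0 = 0)
    (hGIs : ∀ x C, Integrable
      (fun x' => (A C).sup' ⟨c0, hc0 C⟩ (fun c => r (p' x') c + Vs (f C c))) (κ x))
    (hGIL : ∀ x C, Integrable
      (fun x' => (A C).sup' ⟨c0, hc0 C⟩ (fun c => r (p' x') c + VL (f C c))) (κ x))
    (hGIU : ∀ x C, Integrable
      (fun x' => (A C).sup' ⟨c0, hc0 C⟩ (fun c => r (p' x') c + VU (f C c))) (κ x))
    (hIs : ∀ C, Integrable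
      (fun x => max (u x + G Vs x C - Vs (f C c0)) 0 - max (u x) 0) Pj)
    (hIL : ∀ C, Integrable
      (fun x => (if 0 ≤ u x then (1 : ℝ) else 0) * (G VL x C - VL (f C c0))) Pj)
    (hIU : ∀ C, Integrable
      (fun x => (if 0 ≤ u x + G Vs x C - Vs (f C c0) then (1 : ℝ) else 0) *
        (G VU x C - VU (f C c0))) Pj)
    (hVs : ∀ C, C ≠ C0 → Vs C = Vs (f C c0) + lam *
      ∫ x, (max (u x + G Vs x C - Vs (f C c0)) 0 - max (u x) 0) ∂Pj)
    (hVL : ∀ C, C ≠ C0 → VL C = VL (f C c0) + lam *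
      ∫ x, (if 0 ≤ u x then (1 : ℝ) else 0) * (G VL x C - VL (f C c0)) ∂Pj)
    (hVU : ∀ C, C ≠ C0 → VU C = VU (f C c0) + lam *
      ∫ x, (if 0 ≤ u x + G Vs x C - Vs (f C c0) then (1 : ℝ) else 0) *
        (G VU x C - VU (f C c0)) ∂Pj) :
    ∀ C, VL C ≤ Vs C ∧ Vs C ≤ VU C := by
  obtain ⟨hlam0, hlam1⟩ := hlam
  have hGge : ∀ (W : S → ℝ) (C : S),
      (∀ x, Integrable (fun x' => (A C).sup' ⟨c0, hc0 C⟩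
        (fun c => r (p' x') c + W (f C c))) (κ x)) →
      ∀ x, W (f C c0) ≤ G W x C := by
    intro W C hint x
    rw [hG]
    have hconst : W (f C c0) = ∫ _x', W (f C c0) ∂(κ x) := by simp
    rw [hconst]
    refine integral_mono (integrable_const _) (hint x) (fun x' => ?_)
    have h := Finset.le_sup' (fun c => r (p' x') c + W (f C c)) (hc0 C)
    simpa [hr0] using h
  have hGmono : ∀ (W1 W2 : S → ℝ) (C : S),
      (∀ x, Integrable (fun x' => (A C).sup' ⟨c0, hc0 C⟩
        (fun c => r (p' x') c + W1 (f C c))) (κ x)) →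
      (∀ x, Integrable (fun x' => (A C).sup' ⟨c0, hc0 C⟩
        (fun c => r (p' x') c + W2 (f C c))) (κ x)) →
      (∀ c ∈ A C, W1 (f C c) ≤ W2 (f C c)) → ∀ x, G W1 x C ≤ G W2 x C := by
    intro W1 W2 C h1 h2 hle x
    rw [hG, hG]
    refine integral_mono (h1 x) (h2 x) (fun x' => ?_)
    refine Finset.sup'_le _ _ (fun c hcA => ?_)
    refine le_trans ?_ (Finset.le_sup' (fun c => r (p' x') c + W2 (f C c)) hcA)
    have := hle c hcA; simp only []; linarith
  suffices H : ∀ n C, N C ≤ n → VL C ≤ Vs C ∧ Vs C ≤ VU C by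
    intro C; exact H (N C) C le_rfl
  intro n
  induction n with
  | zero =>
    intro C hC
    by_cases h : C = C0
    · subst h; simp [hVs0, hVL0, hVU0]
    · exact absurd (hN C h c0 (hc0 C)) (by omega)
  | succ n ih =>
    intro C hC
    by_cases h : C = C0
    · subst h; simp [hVs0, hVL0, hVU0]
    have IH : ∀ c ∈ A C, VL (f C c) ≤ Vs (f C c) ∧ Vs (f C c) ≤ VU (f C c) := by
      intro c hc; exact ih (f C c) (by have := hN C h c hc; omega)
    have IH0 := IH c0 (hc0 C)
    have hgeS := hGge Vs C (fun x => hGIs x C)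
    have hL : VL C ≤ Vs C := by
      have hpt : ∀ x, (if 0 ≤ u x then (1:ℝ) else 0) * (G VL x C - VL (f C c0)) ≤
          (max (u x + G Vs x C - Vs (f C c0)) 0 - max (u x) 0)
            + (Vs (f C c0) - VL (f C c0)) := by
        intro x
        have hge := hgeS x
        have hmono := hGmono VL Vs C (fun x => hGIL x C) (fun x => hGIs x C)
          (fun c hc => (IH c hc).1) x
        by_cases hx : 0 ≤ u x
        · simp only [if_pos hx, one_mul]
          have h1 : u x + G Vs x C - Vs (f C c0) ≤
              max (u x + G Vs x C - Vs (f C c0)) 0 := le_max_left _ _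
          have h2 : max (u x) 0 = u x := max_eq_left hx
          linarith
        · simp only [if_neg hx, zero_mul]
          have h1 : (0:ℝ) ≤ max (u x + G Vs x C - Vs (f C c0)) 0 := le_max_right _ _
          have h2 : max (u x) 0 = 0 := max_eq_right (le_of_not_ge hx)
          linarith [IH0.1]
      have hint : ∫ x, (if 0 ≤ u x then (1:ℝ) else 0) * (G VL x C - VL (f C c0)) ∂Pj ≤
          (∫ x, (max (u x + G Vs x C - Vs (f C c0)) 0 - max (u x) 0) ∂Pj)
            + (Vs (f C c0) - VL (f C c0)) := by
        have h1 := integral_mono (hIL C)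
          ((hIs C).add (integrable_const (Vs (f C c0) - VL (f C c0)))) hpt
        simpa [integral_add (hIs C) (integrable_const _)] using h1
      have e1 := hVL C h
      have e2 := hVs C h
      have h3 := mul_le_mul_of_nonneg_left hint hlam0
      nlinarith [IH0.1, mul_nonneg (by linarith : (0:ℝ) ≤ 1 - lam)
        (by linarith [IH0.1] : (0:ℝ) ≤ Vs (f C c0) - VL (f C c0))]
    have hU : Vs C ≤ VU C := by
      have hpt : ∀ x, (max (u x + G Vs x C - Vs (f C c0)) 0 - max (u x) 0) ≤
          (if 0 ≤ u x + G Vs x C - Vs (f C c0) then (1:ℝ) else 0) *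
            (G VU x C - VU (f C c0)) + (VU (f C c0) - Vs (f C c0)) := by
        intro x
        have hmono := hGmono Vs VU C (fun x => hGIs x C) (fun x => hGIU x C)
          (fun c hc => (IH c hc).2) x
        by_cases hx : 0 ≤ u x + G Vs x C - Vs (f C c0)
        · simp only [if_pos hx, one_mul]
          have h1 : max (u x + G Vs x C - Vs (f C c0)) 0 =
              u x + G Vs x C - Vs (f C c0) := max_eq_left hx
          have h2 : u x ≤ max (u x) 0 := le_max_left _ _
          linarith
        · simp only [if_neg hx, zero_mul]
          have h1 : max (u x + G Vs x C - Vs (f C c0)) 0 = 0 :=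
            max_eq_right (le_of_not_ge hx)
          have h2 : (0:ℝ) ≤ max (u x) 0 := le_max_right _ _
          linarith [IH0.2]
      have hint : ∫ x, (max (u x + G Vs x C - Vs (f C c0)) 0 - max (u x) 0) ∂Pj ≤
          (∫ x, (if 0 ≤ u x + G Vs x C - Vs (f C c0) then (1:ℝ) else 0) *
            (G VU x C - VU (f C c0)) ∂Pj) + (VU (f C c0) - Vs (f C c0)) := by
        have h1 := integral_mono (hIs C)
          ((hIU C).add (integrable_const (VU (f C c0) - Vs (f C c0)))) hpt
        simp only [Pi.add_apply] at h1
        rw [integral_add (hIU C) (integrable_const _), integral_const,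
          probReal_univ, one_smul] at h1
        exact h1
      have e1 := hVs C h
      have e2 := hVU C h
      have h3 := mul_le_mul_of_nonneg_left hint hlam0
      nlinarith [IH0.2, mul_nonneg (by linarith : (0:ℝ) ≤ 1 - lam)
        (by linarith [IH0.2] : (0:ℝ) ≤ VU (f C c0) - Vs (f C c0))]
    exact ⟨hL, hU⟩
end

section
/- Suppose λ̂ ∈ [0,1], there is a rank function N : S → ℕ with N(C0) = 0 and N(f(C, c)) < N(C) for every C ≠ C0 and every c ∈ A(C), and V̂ : S → ℝ satisfies V̂(C0) = 0 and, for every C ≠ C0 (with all displayed integrals well defined), V̂(C) = V̂(f(C)) + λ̂·∫ [max_{c ∈ A(C)} (r(p, c) + V̂(f(C, c))) − V̂(f(C))] dμ̂(p). Suppose further W : S → ℝ satisfies W(C0) = 0, W(f(C)) ≤ W(C) for every C ≠ C0, and r(p, c) + W(f(C, c)) ≤ W(C) for every C ≠ C0, every c ∈ A(C) and every fare p in the support of μ̂. Then 0 ≤ V̂(C) ≤ W(C) for every C ∈ S; in particular, the value of a coupon set is bounded by any compatible total-coupon-value function W. -/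
open MeasureTheory

lemma ae_support (μ : Measure ℝ) :
    ∀ᵐ p ∂μ, ∀ U : Set ℝ, IsOpen U → p ∈ U → μ U ≠ 0 := by
  set ι := {U : Set ℝ // IsOpen U ∧ μ U = 0}
  obtain ⟨T, hTc, hT⟩ := TopologicalSpace.isOpen_iUnion_countable
    (fun i : ι => (i : Set ℝ)) (fun i => i.2.1)
  have hBnull : μ (⋃ i : ι, (i : Set ℝ)) = 0 := by
    rw [← hT]
    exact (measure_biUnion_null_iff hTc).2 fun i _ => i.2.2
  filter_upwards [measure_eq_zero_iff_ae_notMem.mp hBnull] with p hp U hU hpU hU0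
  exact hp (Set.mem_iUnion.2 ⟨⟨U, hU, hU0⟩, hpU⟩)

/-- The approximate value `V̂` of a coupon set is nonnegative and bounded above
by any compatible total-coupon-value function `W`: `0 ≤ V̂(C) ≤ W(C)`.
Here "`p` in the support of `μ̂`" is expressed as: every open set containing `p`
has nonzero `μ̂`-measure. -/
theorem stmt_6 {S Act : Type*}
    (C0 : S) (A : S → Finset Act) (c0 : Act)
    (hA0 : A C0 = {c0}) (hc0 : ∀ C, c0 ∈ A C)
    (f : S → Act → S) (hf0 : f C0 c0 = C0)
    (r : ℝ → Act → ℝ) (hr0 : ∀ p, r p c0 = 0) (hr : ∀ p c, 0 ≤ r p c)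
    (μ : Measure ℝ) [IsProbabilityMeasure μ]
    (lam : ℝ) (hlam : lam ∈ Set.Icc (0 : ℝ) 1)
    (N : S → ℕ) (hN0 : N C0 = 0)
    (hN : ∀ C, C ≠ C0 → ∀ c ∈ A C, N (f C c) < N C)
    (V : S → ℝ) (hV0 : V C0 = 0)
    (hInt : ∀ C, C ≠ C0 → Integrable (fun p =>
      (A C).sup' ⟨c0, hc0 C⟩ (fun c => r p c + V (f C c)) - V (f C c0)) μ)
    (hV : ∀ C, C ≠ C0 → V C = V (f C c0) + lam *
      ∫ p, ((A C).sup' ⟨c0, hc0 C⟩ (fun c => r p c + V (f C c)) - V (f C c0)) ∂μ)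
    (W : S → ℝ) (hW0 : W C0 = 0)
    (hWf : ∀ C, C ≠ C0 → W (f C c0) ≤ W C)
    (hWr : ∀ C, C ≠ C0 → ∀ c ∈ A C, ∀ p : ℝ,
      (∀ U : Set ℝ, IsOpen U → p ∈ U → μ U ≠ 0) → r p c + W (f C c) ≤ W C) :
    ∀ C, 0 ≤ V C ∧ V C ≤ W C := by
  have main : ∀ n : ℕ, ∀ C, N C ≤ n → 0 ≤ V C ∧ V C ≤ W C := by
    intro n
    induction n with
    | zero =>
      intro C hC
      by_cases h : C = C0
      · simp [h, hV0, hW0]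
      · exact absurd (hN C h c0 (hc0 C)) (by omega)
    | succ n ih =>
      intro C hC
      by_cases h : C = C0
      · simp [h, hV0, hW0]
      · have ihc : ∀ c ∈ A C, 0 ≤ V (f C c) ∧ V (f C c) ≤ W (f C c) := by
          intro c hc
          exact ih _ (by have := hN C h c hc; omega)
        have h0 := ihc c0 (hc0 C)
        -- integrand nonneg
        have hnn : ∀ p : ℝ, 0 ≤ (A C).sup' ⟨c0, hc0 C⟩ (fun c => r p c + V (f C c))
            - V (f C c0) := by
          intro p
          have : r p c0 + V (f C c0) ≤ (A C).sup' ⟨c0, hc0 C⟩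
              (fun c => r p c + V (f C c)) :=
            Finset.le_sup' (fun c => r p c + V (f C c)) (hc0 C)
          rw [hr0] at this; linarith
        have hIge : 0 ≤ ∫ p, ((A C).sup' ⟨c0, hc0 C⟩ (fun c => r p c + V (f C c))
            - V (f C c0)) ∂μ :=
          integral_nonneg hnn
        -- a.e. upper bound
        have hub : ∀ᵐ p ∂μ, (A C).sup' ⟨c0, hc0 C⟩ (fun c => r p c + V (f C c))
            - V (f C c0) ≤ W C - V (f C c0) := by
          filter_upwards [ae_support μ] with p hp
          have : (A C).sup' ⟨c0, hc0 C⟩ (fun c => r p c + V (f C c)) ≤ W C := by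
            apply Finset.sup'_le
            intro c hc
            have h1 := (ihc c hc).2
            have h2 := hWr C h c hc p hp
            linarith
          linarith
        have hIle : ∫ p, ((A C).sup' ⟨c0, hc0 C⟩ (fun c => r p c + V (f C c))
            - V (f C c0)) ∂μ ≤ W C - V (f C c0) := by
          calc ∫ p, ((A C).sup' ⟨c0, hc0 C⟩ (fun c => r p c + V (f C c))
              - V (f C c0)) ∂μ
              ≤ ∫ _, (W C - V (f C c0)) ∂μ :=
                integral_mono_ae (hInt C h) (integrable_const _) hub
            _ = W C - V (f C c0) := by simp
        have hVW0 : V (f C c0) ≤ W C := le_trans h0.2 (hWf C h)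
        obtain ⟨hl0, hl1⟩ := hlam
        rw [hV C h]
        constructor
        · nlinarith [h0.1]
        · nlinarith
  intro C; exact main (N C) C le_rfl
end

section
/- Let γ ∈ [0,1) be a per-period discount factor, let v > 0 be a face value, and let p* ≥ v be a realized trip fare. Then for every natural number T, the immediate redemption value strictly exceeds the discounted value of deferring: min(p*, v) > γ·V(v, T). Consequently, a utility-maximizing traveler holding a single coupon with face value v should always redeem it when the realized fare is at least v and there is temporal discounting. -/
open MeasureTheory

/-- With temporal discounting (`γ ∈ [0,1)`), a face value `v > 0` and a
realized fare `p* ≥ v`, the immediate redemption value strictly exceeds the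
discounted value of deferring: `min(p*, v) > γ·V(v, T)` for every `T`. -/
theorem stmt_9 (lam : ℝ) (hlam : lam ∈ Set.Icc (0 : ℝ) 1)
    (μ : Measure ℝ) [IsProbabilityMeasure μ]
    (hsupp : ∀ᵐ p ∂μ, 0 ≤ p)
    (hid : Integrable (fun p : ℝ => p) μ)
    (V : ℝ → ℕ → ℝ)
    (hV0 : ∀ v, V v 0 = lam * ∫ p, min p v ∂μ)
    (hVS : ∀ v T, V v (T + 1) = V v T + lam * ∫ p, max (min p v - V v T) 0 ∂μ)
    (γ : ℝ) (hγ : γ ∈ Set.Ico (0 : ℝ) 1)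
    (v : ℝ) (hv : 0 < v) (pstar : ℝ) (hp : v ≤ pstar) :
    ∀ T : ℕ, γ * V v T < min pstar v := by
  obtain ⟨hl0, hl1⟩ := hlam
  obtain ⟨hg0, hg1⟩ := hγ
  have hmin : Integrable (fun p : ℝ => min p v) μ := hid.inf (integrable_const v)
  have key : ∀ T, 0 ≤ V v T ∧ V v T ≤ v := by
    intro T
    induction T with
    | zero =>
      have h1 : (0:ℝ) ≤ ∫ p, min p v ∂μ := by
        refine integral_nonneg_of_ae ?_
        filter_upwards [hsupp] with p hp0
        exact le_min hp0 hv.le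
      have h2 : (∫ p, min p v ∂μ) ≤ v := by
        calc (∫ p, min p v ∂μ) ≤ ∫ _p, v ∂μ :=
              integral_mono hmin (integrable_const v) (fun p => min_le_right p v)
          _ = v := by simp
      constructor
      · rw [hV0]; exact mul_nonneg hl0 h1
      · rw [hV0]
        calc lam * ∫ p, min p v ∂μ ≤ 1 * v := by
              exact mul_le_mul hl1 h2 h1 zero_le_one
          _ = v := one_mul v
    | succ T ih =>
      obtain ⟨ih0, ihv⟩ := ih
      have hint : Integrable (fun p : ℝ => max (min p v - V v T) 0) μ :=
        (hmin.sub (integrable_const _)).sup (integrable_const 0)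
      have h1 : (0:ℝ) ≤ ∫ p, max (min p v - V v T) 0 ∂μ :=
        integral_nonneg (fun p => le_max_right _ _)
      have h2 : (∫ p, max (min p v - V v T) 0 ∂μ) ≤ v - V v T := by
        calc (∫ p, max (min p v - V v T) 0 ∂μ) ≤ ∫ _p, v - V v T ∂μ := by
              refine integral_mono hint (integrable_const _) (fun p => ?_)
              exact max_le (by simp [min_le_right p v]) (by linarith)
          _ = v - V v T := by simp
      constructor
      · rw [hVS]
        have := mul_nonneg hl0 h1
        linarith
      · rw [hVS]
        have : lam * ∫ p, max (min p v - V v T) 0 ∂μ ≤ 1 * (v - V v T) :=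
          mul_le_mul hl1 h2 h1 zero_le_one
        linarith
  intro T
  obtain ⟨h0, hle⟩ := key T
  have : γ * V v T ≤ γ * v := mul_le_mul_of_nonneg_left hle hg0
  have : γ * v < v := by nlinarith
  have hmin' : min pstar v = v := min_eq_right hp
  linarith [mul_le_mul_of_nonneg_left hle hg0]
end

section
/- The single-coupon value function is nondecreasing in the face value: for all 0 ≤ v1 ≤ v2 and every natural number T, V(v1, T) ≤ V(v2, T). -/
open MeasureTheory

lemma min_integrable (μ : Measure ℝ) [IsProbabilityMeasure μ]
    (hid : Integrable (fun p : ℝ => p) μ) (v : ℝ) :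
    Integrable (fun p : ℝ => min p v) μ := by
  exact hid.inf (integrable_const v)

lemma pointwise_mono {lam c1 c2 a b : ℝ} (h0 : 0 ≤ lam) (h1 : lam ≤ 1)
    (hc : c1 ≤ c2) (hab : a ≤ b) :
    c1 + lam * max (a - c1) 0 ≤ c2 + lam * max (b - c2) 0 := by
  have h1' : max (a - c1) 0 ≤ max (b - c1) 0 := by
    apply max_le_max _ le_rfl; linarith
  have h2 : max (b - c1) 0 - max (b - c2) 0 ≤ c2 - c1 := by
    rcases le_total b c1 with h | h
    · have : max (b - c1) 0 = 0 := max_eq_right (by linarith)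
      rw [this]; have := le_max_right (b - c2) (0:ℝ); linarith
    · rcases le_total b c2 with h' | h'
      · have e1 : max (b - c1) 0 = b - c1 := max_eq_left (by linarith)
        have e2 : max (b - c2) 0 = 0 := max_eq_right (by linarith)
        rw [e1, e2]; linarith
      · have e1 : max (b - c1) 0 = b - c1 := max_eq_left (by linarith)
        have e2 : max (b - c2) 0 = b - c2 := max_eq_left (by linarith)
        rw [e1, e2]; linarith
  have h3 : 0 ≤ max (b - c1) 0 - max (b - c2) 0 := by
    have : max (b - c2) 0 ≤ max (b - c1) 0 := by
      apply max_le_max _ le_rfl; linarith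
    linarith
  nlinarith [mul_le_mul_of_nonneg_right h1 h3,
    mul_le_mul_of_nonneg_left h1' h0]

/-- The single-coupon value function is nondecreasing in the face value:
for all `0 ≤ v1 ≤ v2` and every `T`, `V(v1, T) ≤ V(v2, T)`. -/
theorem stmt_10 (lam : ℝ) (hlam : lam ∈ Set.Icc (0 : ℝ) 1)
    (μ : Measure ℝ) [IsProbabilityMeasure μ]
    (hsupp : ∀ᵐ p ∂μ, 0 ≤ p)
    (hid : Integrable (fun p : ℝ => p) μ)
    (V : ℝ → ℕ → ℝ)
    (hV0 : ∀ v, V v 0 = lam * ∫ p, min p v ∂μ)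
    (hVS : ∀ v T, V v (T + 1) = V v T + lam * ∫ p, max (min p v - V v T) 0 ∂μ) :
    ∀ v1 v2 : ℝ, 0 ≤ v1 → v1 ≤ v2 → ∀ T : ℕ, V v1 T ≤ V v2 T := by
  obtain ⟨h0, h1⟩ := hlam
  intro v1 v2 _ hv T
  induction T with
  | zero =>
    rw [hV0, hV0]
    apply mul_le_mul_of_nonneg_left _ h0
    apply integral_mono (min_integrable μ hid v1) (min_integrable μ hid v2)
    intro p
    exact min_le_min le_rfl hv
  | succ T ih =>
    rw [hVS, hVS]
    set c1 := V v1 T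
    set c2 := V v2 T
    have hg : ∀ v c : ℝ, Integrable (fun p : ℝ => max (min p v - c) 0) μ := by
      intro v c
      have := (((min_integrable μ hid v).sub (integrable_const c)).pos_part)
      simpa [Pi.sub_apply] using this
    have hint : ∀ v c : ℝ, Integrable (fun p : ℝ => c + lam * max (min p v - c) 0) μ :=
      fun v c => (integrable_const c).add ((hg v c).const_mul lam)
    have key : (∫ p, (c1 + lam * max (min p v1 - c1) 0) ∂μ)
        ≤ ∫ p, (c2 + lam * max (min p v2 - c2) 0) ∂μ := by
      apply integral_mono (hint v1 c1) (hint v2 c2)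
      intro p
      exact pointwise_mono h0 h1 ih (min_le_min le_rfl hv)
    have expand : ∀ v c : ℝ, (∫ p, (c + lam * max (min p v - c) 0) ∂μ)
        = c + lam * ∫ p, max (min p v - c) 0 ∂μ := by
      intro v c
      rw [integral_add (integrable_const c) ((hg v c).const_mul lam),
        integral_const, integral_const_mul]
      simp
    rw [expand v1 c1, expand v2 c2] at key
    exact key
end

section
/- For a fixed trip frequency λ, fare distribution μ and remaining validity time T, the gap between a coupon's face value and its single-coupon value is nondecreasing in the face value: for all 0 ≤ v1 ≤ v2 and every natural number T, one has v1 − V(v1, T) ≤ v2 − V(v2, T); equivalently, V(v2, T) − V(v1, T) ≤ v2 − v1. -/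
open MeasureTheory

lemma integrable_min_const {μ : Measure ℝ} [IsFiniteMeasure μ] (hid : Integrable (fun p : ℝ => p) μ)
    (v : ℝ) : Integrable (fun p : ℝ => min p v) μ :=
  hid.inf (integrable_const v)

lemma integrable_max_helper {μ : Measure ℝ} [IsFiniteMeasure μ] (hid : Integrable (fun p : ℝ => p) μ)
    (v c : ℝ) : Integrable (fun p : ℝ => max (min p v - c) 0) μ :=
  ((integrable_min_const hid v).sub (integrable_const c)).sup (integrable_const 0)

/-- The gap between a coupon's face value and its single-coupon value is
nondecreasing in the face value: for all `0 ≤ v1 ≤ v2` and every `T`,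
`v1 − V(v1, T) ≤ v2 − V(v2, T)`. -/
theorem stmt_11 (lam : ℝ) (hlam : lam ∈ Set.Icc (0 : ℝ) 1)
    (μ : Measure ℝ) [IsProbabilityMeasure μ]
    (hsupp : ∀ᵐ p ∂μ, 0 ≤ p)
    (hid : Integrable (fun p : ℝ => p) μ)
    (V : ℝ → ℕ → ℝ)
    (hV0 : ∀ v, V v 0 = lam * ∫ p, min p v ∂μ)
    (hVS : ∀ v T, V v (T + 1) = V v T + lam * ∫ p, max (min p v - V v T) 0 ∂μ) :
    ∀ v1 v2 : ℝ, 0 ≤ v1 → v1 ≤ v2 → ∀ T : ℕ,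
      v1 - V v1 T ≤ v2 - V v2 T := by
  obtain ⟨hl0, hl1⟩ := hlam
  intro v1 v2 _ h12 T
  -- rewrite the goal as V v2 T - V v1 T ≤ v2 - v1
  suffices h : V v2 T - V v1 T ≤ v2 - v1 by linarith
  induction T with
  | zero =>
    rw [hV0, hV0, ← mul_sub,
      ← integral_sub (integrable_min_const hid v2) (integrable_min_const hid v1)]
    have hbound : (∫ p, (min p v2 - min p v1) ∂μ) ≤ v2 - v1 := by
      have : (∫ p, (min p v2 - min p v1) ∂μ) ≤ ∫ _p, (v2 - v1) ∂μ := by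
        apply integral_mono
          ((integrable_min_const hid v2).sub (integrable_min_const hid v1))
          (integrable_const _)
        intro p
        simp only [Pi.sub_apply]
        rcases le_total p v1 with h | h
        · rw [min_eq_left h, min_eq_left (h.trans h12)]; linarith
        · rw [min_eq_right h]
          have : min p v2 ≤ v2 := min_le_right _ _
          linarith
      simpa using this
    calc lam * ∫ p, (min p v2 - min p v1) ∂μ
        ≤ 1 * (v2 - v1) := by
          rcases le_or_gt (∫ p, (min p v2 - min p v1) ∂μ) 0 with h | h
          · nlinarith
          · nlinarith
      _ = v2 - v1 := one_mul _
  | succ T ih =>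
    rw [hVS, hVS]
    set c1 := V v1 T
    set c2 := V v2 T
    have key : (∫ p, max (min p v2 - c2) 0 ∂μ) - (∫ p, max (min p v1 - c1) 0 ∂μ)
        ≤ (v2 - v1) - (c2 - c1) := by
      rw [← integral_sub (integrable_max_helper hid v2 c2) (integrable_max_helper hid v1 c1)]
      have : (∫ p, (max (min p v2 - c2) 0 - max (min p v1 - c1) 0) ∂μ)
          ≤ ∫ _p, ((v2 - v1) - (c2 - c1)) ∂μ := by
        apply integral_mono
          ((integrable_max_helper hid v2 c2).sub (integrable_max_helper hid v1 c1))
          (integrable_const _)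
        intro p
        simp only [Pi.sub_apply]
        have hmin : min p v2 - min p v1 ≤ v2 - v1 := by
          rcases le_total p v1 with h | h
          · rw [min_eq_left h, min_eq_left (h.trans h12)]; linarith
          · rw [min_eq_right h]
            have : min p v2 ≤ v2 := min_le_right _ _
            linarith
        have h1 : min p v2 - c2 ≤ (min p v1 - c1) + ((v2 - v1) - (c2 - c1)) := by
          linarith
        have h2 : (0:ℝ) ≤ 0 + ((v2 - v1) - (c2 - c1)) := by linarith
        have h3 := max_le_max h1 h2
        rw [max_add_add_right] at h3
        linarith
      simpa using this
    have hI1 : (0:ℝ) ≤ ∫ p, max (min p v1 - c1) 0 ∂μ :=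
      integral_nonneg fun p => le_max_right _ _
    have hI2 : (0:ℝ) ≤ ∫ p, max (min p v2 - c2) 0 ∂μ :=
      integral_nonneg fun p => le_max_right _ _
    nlinarith [key, ih, hI1, hI2]
end
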